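/- Let Z : [0,1] → ℝ be continuous with Z(0) = Z(1), set Z_* := min_{[0,1]} Z, and fix t ∈ [0,1]. Then for every r ∈ [0, Z(t) − Z_*], the point γ_t(r) is well defined (at least one of the two defining sets is nonempty and attains its minimum) and satisfies Z(γ_t(r)) = Z(t) − r; moreover, for all 0 ≤ r ≤ r' ≤ Z(t) − Z_*, D(γ_t(r), γ_t(r')) = r' − r. In particular, r ↦ γ_t(r) is a geodesic for the pseudometric D from t (= γ_t(0)) to a point where Z attains its minimum. -/

import Mathlib

/-- The cyclic interval `[s,t]` in `[0,1]`. -/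
def cyclInt (s t : ℝ) : Set ℝ :=
  if s ≤ t then Set.Icc s t else Set.Icc s 1 ∪ Set.Icc 0 t

/-- `D°(s,t) = Z(s) + Z(t) - 2 max( min_{[s,t]} Z, min_{[t,s]} Z )`. -/
noncomputable def Dcirc (Z : ℝ → ℝ) (s t : ℝ) : ℝ :=
  Z s + Z t - 2 * max (sInf (Z '' cyclInt s t)) (sInf (Z '' cyclInt t s))

/-- `D(s,t)`, the infimum over finite chains in `[0,1]` of sums of `D°`-increments. -/
noncomputable def Dmap (Z : ℝ → ℝ) (s t : ℝ) : ℝ :=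
  sInf {x | ∃ k : ℕ, 1 ≤ k ∧ ∃ f : ℕ → ℝ,
    (∀ i ≤ k, f i ∈ Set.Icc (0:ℝ) 1) ∧ f 0 = s ∧ f k = t ∧
    x = ∑ i ∈ Finset.range k, Dcirc Z (f i) (f (i + 1))}

/-- First candidate set in the definition of the simple geodesic:
points of `[t,1]` where `Z` equals `Z t - r`. -/
def gammaSetR (Z : ℝ → ℝ) (t r : ℝ) : Set ℝ :=
  {s | s ∈ Set.Icc t 1 ∧ Z s = Z t - r}

/-- Second candidate set: points of `[0,t]` where `Z` equals `Z t - r`. -/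
def gammaSetL (Z : ℝ → ℝ) (t r : ℝ) : Set ℝ :=
  {s | s ∈ Set.Icc 0 t ∧ Z s = Z t - r}

open Classical in
/-- The simple geodesic `γ_t(r)`. -/
noncomputable def gammaP (Z : ℝ → ℝ) (t r : ℝ) : ℝ :=
  if (gammaSetR Z t r).Nonempty then sInf (gammaSetR Z t r) else sInf (gammaSetL Z t r)

/-!
Let `c = Z t - r`. Walking cyclically from `t`, `γ_t(r)` is the first time `Z` hits level `c`,
so `Z ≥ Z(γ_t(r))` on the cyclic interval `[t, γ_t(r)]`; for `r ≤ r'` the point `γ_t(r)` lies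
in `[t, γ_t(r')]` (intermediate value theorem, using `Z 0 = Z 1` when the walk wraps around).
Hence `Z ≥ Z(γ_t(r'))` on `[γ_t(r), γ_t(r')]`, which makes the single step
`D°(γ_t(r), γ_t(r')) = Z(γ_t(r)) - Z(γ_t(r')) = r' - r`. Conversely every `D°`-step is at least
the drop of `Z` along it, so every chain costs at least `r' - r`.
-/

open Set

lemma cyclInt_subset_Icc {s t : ℝ} (hs : s ∈ Icc (0:ℝ) 1) (ht : t ∈ Icc (0:ℝ) 1) :
    cyclInt s t ⊆ Icc 0 1 := by
  unfold cyclInt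
  split_ifs
  · exact Icc_subset_Icc hs.1 ht.2
  · exact union_subset (Icc_subset_Icc hs.1 le_rfl) (Icc_subset_Icc le_rfl ht.2)

lemma left_mem_cyclInt {s t : ℝ} (hs : s ∈ Icc (0:ℝ) 1) : s ∈ cyclInt s t := by
  unfold cyclInt
  split_ifs with h
  · exact ⟨le_rfl, h⟩
  · exact Or.inl ⟨le_rfl, hs.2⟩

lemma right_mem_cyclInt {s t : ℝ} (ht : t ∈ Icc (0:ℝ) 1) : t ∈ cyclInt s t := by
  unfold cyclInt
  split_ifs with h
  · exact ⟨h, le_rfl⟩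
  · exact Or.inr ⟨ht.1, le_rfl⟩

lemma cyclInt_subset_of_mem {t a b : ℝ} (ha : a ∈ cyclInt t b) : cyclInt a b ⊆ cyclInt t b := by
  unfold cyclInt at ha ⊢
  by_cases htb : t ≤ b
  · rw [if_pos htb] at ha
    rw [if_pos ha.2, if_pos htb]
    exact Icc_subset_Icc ha.1 le_rfl
  · rw [if_neg htb] at ha ⊢
    rcases ha with ha | ha
    · rw [if_neg fun hab => htb (ha.1.trans hab)]
      exact union_subset_union_left _ (Icc_subset_Icc ha.1 le_rfl)
    · rw [if_pos ha.2]
      exact subset_union_of_subset_right (Icc_subset_Icc ha.1 le_rfl) _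

section LevelSet

variable {Z : ℝ → ℝ} {u v c : ℝ}

lemma exists_mem_Icc_apply_eq (hZ : ContinuousOn Z (Icc u v)) (hu : c ≤ Z u) {s : ℝ}
    (hs : s ∈ Icc u v) (hZs : Z s ≤ c) : ∃ x ∈ Icc u s, Z x = c :=
  intermediate_value_Icc' hs.1 (hZ.mono (Icc_subset_Icc le_rfl hs.2)) ⟨hZs, hu⟩

lemma isLeast_csInf_levelSet (hZ : ContinuousOn Z (Icc u v))
    (hne : {s ∈ Icc u v | Z s = c}.Nonempty) :
    IsLeast {s ∈ Icc u v | Z s = c} (sInf {s ∈ Icc u v | Z s = c}) :=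
  (hZ.preimage_isClosed_of_isClosed isClosed_Icc isClosed_singleton).isLeast_csInf hne
    ⟨u, fun _ hs => hs.1.1⟩

variable {b : ℝ}

lemma IsLeast.le_of_apply_le (hb : IsLeast {s ∈ Icc u v | Z s = c} b)
    (hZ : ContinuousOn Z (Icc u v)) (hu : c ≤ Z u) {s : ℝ} (hs : s ∈ Icc u v) (hZs : Z s ≤ c) :
    b ≤ s := by
  obtain ⟨x, hx, hZx⟩ := exists_mem_Icc_apply_eq hZ hu hs hZs
  exact (hb.2 ⟨⟨hx.1, hx.2.trans hs.2⟩, hZx⟩).trans hx.2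

lemma IsLeast.le_apply_of_mem_Icc (hb : IsLeast {s ∈ Icc u v | Z s = c} b)
    (hZ : ContinuousOn Z (Icc u v)) (hu : c ≤ Z u) {s : ℝ} (hs : s ∈ Icc u b) : c ≤ Z s := by
  by_contra! hlt
  have hsb : s = b := le_antisymm hs.2 (hb.le_of_apply_le hZ hu ⟨hs.1, hs.2.trans hb.1.1.2⟩ hlt.le)
  exact hlt.ne (hsb ▸ hb.1.2)

end LevelSet

section Distance

variable {Z : ℝ → ℝ} (hbdd : BddBelow (Z '' Icc 0 1))
include hbdd

lemma sInf_image_cyclInt_le {a b x : ℝ} (ha : a ∈ Icc (0:ℝ) 1) (hb : b ∈ Icc (0:ℝ) 1)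
    (hx : x ∈ cyclInt a b) : sInf (Z '' cyclInt a b) ≤ Z x :=
  csInf_le (hbdd.mono (image_mono (cyclInt_subset_Icc ha hb))) ⟨x, hx, rfl⟩

lemma sub_le_Dcirc {a b : ℝ} (ha : a ∈ Icc (0:ℝ) 1) (hb : b ∈ Icc (0:ℝ) 1) :
    Z a - Z b ≤ Dcirc Z a b := by
  have hmax : max (sInf (Z '' cyclInt a b)) (sInf (Z '' cyclInt b a)) ≤ Z b :=
    max_le (sInf_image_cyclInt_le hbdd ha hb (right_mem_cyclInt hb))
      (sInf_image_cyclInt_le hbdd hb ha (left_mem_cyclInt hb))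
  rw [Dcirc]
  linarith

lemma sub_le_sum_Dcirc {k : ℕ} {f : ℕ → ℝ} (hf : ∀ i ≤ k, f i ∈ Icc (0:ℝ) 1) :
    Z (f 0) - Z (f k) ≤ ∑ i ∈ Finset.range k, Dcirc Z (f i) (f (i + 1)) := by
  rw [← Finset.sum_range_sub' (fun i => Z (f i))]
  refine Finset.sum_le_sum fun i hi => ?_
  rw [Finset.mem_range] at hi
  exact sub_le_Dcirc hbdd (hf i hi.le) (hf (i + 1) hi)

variable {a b : ℝ} (ha : a ∈ Icc (0:ℝ) 1) (hb : b ∈ Icc (0:ℝ) 1)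
  (hmin : ∀ s ∈ cyclInt a b, Z b ≤ Z s)
include ha hb hmin

lemma Dcirc_eq_of_forall_le : Dcirc Z a b = Z a - Z b := by
  have hab : sInf (Z '' cyclInt a b) = Z b :=
    le_antisymm (sInf_image_cyclInt_le hbdd ha hb (right_mem_cyclInt hb))
      (le_csInf ⟨Z b, b, right_mem_cyclInt hb, rfl⟩ (by rintro _ ⟨s, hs, rfl⟩; exact hmin s hs))
  have hba : sInf (Z '' cyclInt b a) ≤ Z b :=
    sInf_image_cyclInt_le hbdd hb ha (left_mem_cyclInt hb)
  rw [Dcirc, hab, max_eq_left hba]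
  ring

lemma Dmap_eq_of_forall_le : Dmap Z a b = Z a - Z b := by
  set chains := {x | ∃ k : ℕ, 1 ≤ k ∧ ∃ f : ℕ → ℝ,
    (∀ i ≤ k, f i ∈ Icc (0:ℝ) 1) ∧ f 0 = a ∧ f k = b ∧
    x = ∑ i ∈ Finset.range k, Dcirc Z (f i) (f (i + 1))}
  have hlower : ∀ x ∈ chains, Z a - Z b ≤ x := by
    rintro x ⟨k, -, f, hf, rfl, rfl, rfl⟩
    exact sub_le_sum_Dcirc hbdd hf
  have hstep : Z a - Z b ∈ chains := by
    refine ⟨1, le_rfl, fun i => if i = 0 then a else b, fun i _ => ?_, if_pos rfl,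
      if_neg one_ne_zero, ?_⟩
    · dsimp only
      split_ifs
      · exact ha
      · exact hb
    · simp [Dcirc_eq_of_forall_le hbdd ha hb hmin]
  exact le_antisymm (csInf_le ⟨_, hlower⟩ hstep) (le_csInf ⟨_, hstep⟩ hlower)

end Distance

section Geodesic

variable {Z : ℝ → ℝ} (hcont : ContinuousOn Z (Icc 0 1)) {t : ℝ} (ht : t ∈ Icc (0:ℝ) 1) {r : ℝ}
include hcont ht

lemma isLeast_gammaP_of_nonempty (hR : (gammaSetR Z t r).Nonempty) :
    IsLeast (gammaSetR Z t r) (gammaP Z t r) := by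
  rw [gammaP, if_pos hR]
  exact isLeast_csInf_levelSet (hcont.mono (Icc_subset_Icc ht.1 le_rfl)) hR

lemma lt_apply_of_not_nonempty (hr : 0 ≤ r) (hR : ¬ (gammaSetR Z t r).Nonempty) :
    ∀ s ∈ Icc t 1, Z t - r < Z s := by
  intro s hs
  by_contra! hle
  obtain ⟨x, hx, hZx⟩ := exists_mem_Icc_apply_eq (hcont.mono (Icc_subset_Icc ht.1 le_rfl))
    (by linarith) hs hle
  exact hR ⟨x, ⟨hx.1, hx.2.trans hs.2⟩, hZx⟩

variable (hr : r ∈ Icc 0 (Z t - sInf (Z '' Icc (0:ℝ) 1)))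
include hr

lemma gammaSetL_nonempty (hR : ¬ (gammaSetR Z t r).Nonempty) : (gammaSetL Z t r).Nonempty := by
  obtain ⟨m, hm, hZm⟩ := (isCompact_Icc.image_of_continuousOn hcont).sInf_mem
    ((nonempty_Icc.2 zero_le_one).image Z)
  have hmt : m ≤ t := not_lt.1 fun hlt =>
    (lt_apply_of_not_nonempty hcont ht hr.1 hR _ ⟨hlt.le, hm.2⟩).not_ge (by linarith [hr.2])
  obtain ⟨x, hx, hZx⟩ := intermediate_value_Icc hmt (hcont.mono (Icc_subset_Icc hm.1 ht.2))
    (show Z t - r ∈ Icc (Z m) (Z t) from ⟨by linarith [hr.2], by linarith [hr.1]⟩)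
  exact ⟨x, ⟨hm.1.trans hx.1, hx.2⟩, hZx⟩

lemma isLeast_gammaP_of_not_nonempty (hR : ¬ (gammaSetR Z t r).Nonempty) :
    IsLeast (gammaSetL Z t r) (gammaP Z t r) := by
  rw [gammaP, if_neg hR]
  exact isLeast_csInf_levelSet (hcont.mono (Icc_subset_Icc le_rfl ht.2))
    (gammaSetL_nonempty hcont ht hr hR)

lemma gammaP_lt_of_not_nonempty (hR : ¬ (gammaSetR Z t r).Nonempty) : gammaP Z t r < t := by
  have hg := isLeast_gammaP_of_not_nonempty hcont ht hr hR
  refine hg.1.1.2.lt_of_ne fun hgt => ?_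
  have hZt := lt_apply_of_not_nonempty hcont ht hr.1 hR _ ⟨le_rfl, ht.2⟩
  have hZg : Z (gammaP Z t r) = Z t - r := hg.1.2
  rw [hgt] at hZg
  linarith

lemma gammaP_mem_levelSet : gammaP Z t r ∈ {s ∈ Icc (0:ℝ) 1 | Z s = Z t - r} := by
  by_cases hR : (gammaSetR Z t r).Nonempty
  · obtain ⟨⟨hg, hZg⟩, -⟩ := isLeast_gammaP_of_nonempty hcont ht hR
    exact ⟨Icc_subset_Icc ht.1 le_rfl hg, hZg⟩
  · obtain ⟨⟨hg, hZg⟩, -⟩ := isLeast_gammaP_of_not_nonempty hcont ht hr hR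
    exact ⟨Icc_subset_Icc le_rfl ht.2 hg, hZg⟩

lemma le_apply_of_mem_cyclInt_gammaP (hZ : Z 0 = Z 1) {s : ℝ}
    (hs : s ∈ cyclInt t (gammaP Z t r)) : Z t - r ≤ Z s := by
  by_cases hR : (gammaSetR Z t r).Nonempty
  · have hg := isLeast_gammaP_of_nonempty hcont ht hR
    rw [cyclInt, if_pos hg.1.1.1] at hs
    exact hg.le_apply_of_mem_Icc (hcont.mono (Icc_subset_Icc ht.1 le_rfl))
      (by linarith [hr.1]) hs
  · have hlt := lt_apply_of_not_nonempty hcont ht hr.1 hR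
    rw [cyclInt, if_neg (gammaP_lt_of_not_nonempty hcont ht hr hR).not_ge] at hs
    rcases hs with hs | hs
    · exact (hlt _ hs).le
    · exact (isLeast_gammaP_of_not_nonempty hcont ht hr hR).le_apply_of_mem_Icc
        (hcont.mono (Icc_subset_Icc le_rfl ht.2)) (by rw [hZ]; exact (hlt 1 ⟨ht.2, le_rfl⟩).le) hs

lemma gammaP_mem_cyclInt (hZ : Z 0 = Z 1) {r' : ℝ}
    (hr' : r' ∈ Icc 0 (Z t - sInf (Z '' Icc (0:ℝ) 1))) (hrr' : r ≤ r') :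
    gammaP Z t r ∈ cyclInt t (gammaP Z t r') := by
  have hZb := (gammaP_mem_levelSet hcont ht hr').2
  by_cases hR' : (gammaSetR Z t r').Nonempty
  · have hcR : ContinuousOn Z (Icc t 1) := hcont.mono (Icc_subset_Icc ht.1 le_rfl)
    have hb := (isLeast_gammaP_of_nonempty hcont ht hR').1.1
    obtain ⟨x, hx, hZx⟩ :=
      exists_mem_Icc_apply_eq (c := Z t - r) hcR (by linarith [hr.1]) hb (by linarith)
    have hxR : x ∈ gammaSetR Z t r := ⟨⟨hx.1, hx.2.trans hb.2⟩, hZx⟩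
    have ha := isLeast_gammaP_of_nonempty hcont ht ⟨x, hxR⟩
    rw [cyclInt, if_pos hb.1]
    exact ⟨ha.1.1.1, (ha.2 hxR).trans hx.2⟩
  · rw [cyclInt, if_neg (gammaP_lt_of_not_nonempty hcont ht hr' hR').not_ge]
    by_cases hR : (gammaSetR Z t r).Nonempty
    · exact Or.inl (isLeast_gammaP_of_nonempty hcont ht hR).1.1
    · have ha := isLeast_gammaP_of_not_nonempty hcont ht hr hR
      have hb := (isLeast_gammaP_of_not_nonempty hcont ht hr' hR').1.1
      have hZ0 : Z t - r ≤ Z 0 := by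
        rw [hZ]; exact (lt_apply_of_not_nonempty hcont ht hr.1 hR _ ⟨ht.2, le_rfl⟩).le
      exact Or.inr ⟨ha.1.1.1,
        ha.le_of_apply_le (hcont.mono (Icc_subset_Icc le_rfl ht.2)) hZ0 hb (by linarith)⟩

end Geodesic

theorem simple_geodesic
    (Z : ℝ → ℝ) (hcont : ContinuousOn Z (Set.Icc 0 1)) (hZ : Z 0 = Z 1)
    (t : ℝ) (ht : t ∈ Set.Icc (0:ℝ) 1) :
    (∀ r ∈ Set.Icc (0:ℝ) (Z t - sInf (Z '' Set.Icc (0:ℝ) 1)),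
      ((gammaSetR Z t r).Nonempty → gammaP Z t r ∈ gammaSetR Z t r) ∧
      (¬ (gammaSetR Z t r).Nonempty →
        (gammaSetL Z t r).Nonempty ∧ gammaP Z t r ∈ gammaSetL Z t r) ∧
      Z (gammaP Z t r) = Z t - r) ∧
    (∀ r r' : ℝ, 0 ≤ r → r ≤ r' → r' ≤ Z t - sInf (Z '' Set.Icc (0:ℝ) 1) →
      Dmap Z (gammaP Z t r) (gammaP Z t r') = r' - r) := by
  refine ⟨fun r hr => ⟨fun hR => (isLeast_gammaP_of_nonempty hcont ht hR).1,
    fun hR => ⟨gammaSetL_nonempty hcont ht hr hR,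
      (isLeast_gammaP_of_not_nonempty hcont ht hr hR).1⟩,
    (gammaP_mem_levelSet hcont ht hr).2⟩, ?_⟩
  intro r r' hr hrr' hr'
  have hrI : r ∈ Icc 0 (Z t - sInf (Z '' Icc (0:ℝ) 1)) := ⟨hr, hrr'.trans hr'⟩
  have hr'I : r' ∈ Icc 0 (Z t - sInf (Z '' Icc (0:ℝ) 1)) := ⟨hr.trans hrr', hr'⟩
  obtain ⟨ha, hZa⟩ := gammaP_mem_levelSet hcont ht hrI
  obtain ⟨hb, hZb⟩ := gammaP_mem_levelSet hcont ht hr'I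
  have hbdd := (isCompact_Icc.image_of_continuousOn hcont).bddBelow
  have hmin : ∀ s ∈ cyclInt (gammaP Z t r) (gammaP Z t r'), Z (gammaP Z t r') ≤ Z s :=
    fun s hs => hZb ▸ le_apply_of_mem_cyclInt_gammaP hcont ht hr'I hZ
      (cyclInt_subset_of_mem (gammaP_mem_cyclInt hcont ht hrI hZ hr'I hrr') hs)
  rw [Dmap_eq_of_forall_le hbdd ha hb hmin, hZa, hZb]
  ring
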